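/- In a finite discounted MDP, let π and π' be policies, and define the surrogate L_π(π') = J(π) + (1/(1−γ)) E_{s∼d_π, a∼π'(·|s)}[A_π(s,a)]. If |A_π(s,a)| ≤ A_max and E_{s∼d_π}[D_TV(π'(·|s), π(·|s))] ≤ δ, then |J(π') − L_π(π')| ≤ (2γ/(1−γ)²) A_max δ. -/

import Mathlib

open scoped BigOperators

section MDP

variable {S A : Type*} [Fintype S] [Fintype A]

/-- `P` is a transition kernel: each `P s a` is a probability distribution on states. -/
def IsKernel (P : S → A → S → ℝ) : Prop :=
  (∀ s a s', 0 ≤ P s a s') ∧ ∀ s a, ∑ s', P s a s' = 1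

/-- `π` is a policy: each `π s` is a probability distribution on actions. -/
def IsPolicy (π : S → A → ℝ) : Prop :=
  (∀ s a, 0 ≤ π s a) ∧ ∀ s, ∑ a, π s a = 1

/-- `ρ` is a probability distribution on states. -/
def IsDist (ρ : S → ℝ) : Prop := (∀ s, 0 ≤ ρ s) ∧ ∑ s, ρ s = 1

/-- Total variation distance between finitely supported distributions. -/
noncomputable def dtv {X : Type*} [Fintype X] (p q : X → ℝ) : ℝ := (1 / 2) * ∑ x, |p x - q x|

/-- One-step state transition probability induced by policy `π`. -/
def stepKernel (P : S → A → S → ℝ) (π : S → A → ℝ) (s s' : S) : ℝ :=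
  ∑ a, π s a * P s a s'

/-- Distribution of the state after `t` steps starting from `s`, following `π`. -/
noncomputable def visit [DecidableEq S] (P : S → A → S → ℝ) (π : S → A → ℝ) : ℕ → S → S → ℝ
  | 0, s, s' => if s' = s then 1 else 0
  | (t + 1), s, s' => ∑ s'', visit P π t s s'' * stepKernel P π s'' s'

/-- Expected one-step reward of policy `π` at state `s`. -/
def rewardOf (r : S → A → ℝ) (π : S → A → ℝ) (s : S) : ℝ := ∑ a, π s a * r s a

/-- State value function `V_π`. -/
noncomputable def Vval [DecidableEq S] (P : S → A → S → ℝ) (r : S → A → ℝ) (γ : ℝ) (π : S → A → ℝ)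
    (s : S) : ℝ :=
  ∑' t : ℕ, γ ^ t * ∑ s', visit P π t s s' * rewardOf r π s'

/-- Action value function `Q_π`. -/
noncomputable def Qval [DecidableEq S] (P : S → A → S → ℝ) (r : S → A → ℝ) (γ : ℝ) (π : S → A → ℝ)
    (s : S) (a : A) : ℝ :=
  r s a + γ * ∑ s', P s a s' * Vval P r γ π s'

/-- Advantage function `A_π = Q_π - V_π`. -/
noncomputable def Adv [DecidableEq S] (P : S → A → S → ℝ) (r : S → A → ℝ) (γ : ℝ) (π : S → A → ℝ)
    (s : S) (a : A) : ℝ :=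
  Qval P r γ π s a - Vval P r γ π s

/-- Expected discounted return `J(π)` from initial distribution `ρ₀`. -/
noncomputable def Jval [DecidableEq S] (P : S → A → S → ℝ) (r : S → A → ℝ) (γ : ℝ) (ρ₀ : S → ℝ)
    (π : S → A → ℝ) : ℝ :=
  ∑ s, ρ₀ s * Vval P r γ π s

/-- Normalized discounted state-visitation distribution `d_π`. -/
noncomputable def dvisit [DecidableEq S] (P : S → A → S → ℝ) (γ : ℝ) (ρ₀ : S → ℝ) (π : S → A → ℝ)
    (s : S) : ℝ :=
  (1 - γ) * ∑' t : ℕ, γ ^ t * ∑ s₀, ρ₀ s₀ * visit P π t s₀ s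

end MDP

/-!
By the performance difference lemma, `(1 - γ) (J(π') - J(π)) = 𝔼_{d_{π'}}[w]` with
`w(s) = 𝔼_{a ∼ π'(·|s)}[A_π(s, a)]`, while the surrogate replaces `d_{π'}` by `d_π`; so the error is
`(1 - γ)⁻¹ ∑ₛ (d_{π'} - d_π)(s) w(s)`, at most `A_max ‖d_{π'} - d_π‖₁ / (1 - γ)`. Both the performance
difference lemma and the visitation-shift bound come from the fixed-point equation
`d_π = (1 - γ) ρ₀ + γ d_π P_π` of the discounted visitation distribution.
-/

open Finset

section

variable {S A : Type*} [Fintype S] [Fintype A]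

lemma sum_abs_sum_mul_le {X Y : Type*} [Fintype X] [Fintype Y] (μ : X → ℝ) (K : X → Y → ℝ)
    (hK : ∀ x y, 0 ≤ K x y) : ∑ y, |∑ x, μ x * K x y| ≤ ∑ x, |μ x| * ∑ y, K x y := by
  calc ∑ y, |∑ x, μ x * K x y| ≤ ∑ y, ∑ x, |μ x| * K x y :=
        sum_le_sum fun y _ => (abs_sum_le_sum_abs _ _).trans_eq <|
          sum_congr rfl fun x _ => by rw [abs_mul, abs_of_nonneg (hK x y)]
    _ = ∑ x, |μ x| * ∑ y, K x y := by rw [sum_comm]; simp only [mul_sum]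

lemma abs_sum_mul_le {X : Type*} [Fintype X] (μ f : X → ℝ) {B : ℝ} (hf : ∀ x, |f x| ≤ B) :
    |∑ x, μ x * f x| ≤ (∑ x, |μ x|) * B := by
  rw [sum_mul]
  exact (abs_sum_le_sum_abs _ _).trans <| sum_le_sum fun x _ => by
    rw [abs_mul]
    exact mul_le_mul_of_nonneg_left (hf x) (abs_nonneg _)

lemma stepKernel_nonneg {P : S → A → S → ℝ} {π : S → A → ℝ} (hP : IsKernel P)
    (hπ : IsPolicy π) (s s' : S) : 0 ≤ stepKernel P π s s' :=
  sum_nonneg fun a _ => mul_nonneg (hπ.1 s a) (hP.1 s a s')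

lemma sum_stepKernel {P : S → A → S → ℝ} {π : S → A → ℝ} (hP : IsKernel P)
    (hπ : IsPolicy π) (s : S) : ∑ s', stepKernel P π s s' = 1 := by
  simp only [stepKernel]
  rw [sum_comm]
  simp [← mul_sum, hP.2, hπ.2 s]

lemma sum_abs_stepKernel_sub_le {P : S → A → S → ℝ} (hP : IsKernel P) (π π' : S → A → ℝ)
    (s : S) : ∑ s', |stepKernel P π' s s' - stepKernel P π s s'| ≤ 2 * dtv (π' s) (π s) := by
  have hdiff : ∀ s', stepKernel P π' s s' - stepKernel P π s s'
      = ∑ a, (π' s a - π s a) * P s a s' := fun s' => by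
    simp only [stepKernel, ← sum_sub_distrib, sub_mul]
  simp only [hdiff]
  refine (sum_abs_sum_mul_le _ _ fun a s' => hP.1 s a s').trans_eq ?_
  simp [hP.2, dtv]

lemma sum_abs_sum_mul_stepKernel_sub_le {P : S → A → S → ℝ} (hP : IsKernel P) (π π' : S → A → ℝ)
    {μ : S → ℝ} (hμ : ∀ s, 0 ≤ μ s) :
    ∑ s', |∑ s, μ s * (stepKernel P π' s s' - stepKernel P π s s')|
      ≤ 2 * ∑ s, μ s * dtv (π' s) (π s) := by
  calc _ ≤ ∑ s', ∑ s, μ s * |stepKernel P π' s s' - stepKernel P π s s'| :=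
        sum_le_sum fun s' _ => (abs_sum_le_sum_abs _ _).trans_eq <| sum_congr rfl fun s _ => by
          rw [abs_mul, abs_of_nonneg (hμ s)]
    _ = ∑ s, μ s * ∑ s', |stepKernel P π' s s' - stepKernel P π s s'| := by
        rw [sum_comm]; simp only [mul_sum]
    _ ≤ ∑ s, μ s * (2 * dtv (π' s) (π s)) :=
        sum_le_sum fun s _ => mul_le_mul_of_nonneg_left (sum_abs_stepKernel_sub_le hP π π' s) (hμ s)
    _ = 2 * ∑ s, μ s * dtv (π' s) (π s) := by rw [mul_sum]; exact sum_congr rfl fun _ _ => by ring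

variable [DecidableEq S]

lemma visit_nonneg {P : S → A → S → ℝ} {π : S → A → ℝ} (hP : IsKernel P) (hπ : IsPolicy π)
    (t : ℕ) (s s' : S) : 0 ≤ visit P π t s s' := by
  induction t generalizing s' with
  | zero => simp only [visit]; split_ifs <;> norm_num
  | succ t ih => exact sum_nonneg fun s'' _ => mul_nonneg (ih s'') (stepKernel_nonneg hP hπ s'' s')

lemma sum_visit {P : S → A → S → ℝ} {π : S → A → ℝ} (hP : IsKernel P) (hπ : IsPolicy π)
    (t : ℕ) (s : S) : ∑ s', visit P π t s s' = 1 := by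
  induction t with
  | zero => simp [visit]
  | succ t ih =>
    simp only [visit]
    rw [sum_comm]
    simp [← mul_sum, sum_stepKernel hP hπ, ih]

lemma visit_le_one {P : S → A → S → ℝ} {π : S → A → ℝ} (hP : IsKernel P) (hπ : IsPolicy π)
    (t : ℕ) (s s' : S) : visit P π t s s' ≤ 1 :=
  sum_visit hP hπ t s ▸ single_le_sum (fun s' _ => visit_nonneg hP hπ t s s') (mem_univ s')

lemma summable_pow_mul_visit {P : S → A → S → ℝ} {π : S → A → ℝ} (hP : IsKernel P)
    (hπ : IsPolicy π) {γ : ℝ} (hγ0 : 0 ≤ γ) (hγ1 : γ < 1) (s s' : S) :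
    Summable fun t => γ ^ t * visit P π t s s' :=
  (summable_geometric_of_lt_one hγ0 hγ1).of_nonneg_of_le
    (fun t => mul_nonneg (pow_nonneg hγ0 t) (visit_nonneg hP hπ t s s'))
    (fun t => mul_le_of_le_one_right (pow_nonneg hγ0 t) (visit_le_one hP hπ t s s'))

/-- The entries of the resolvent `(I - γ P_π)⁻¹ = ∑ₜ γᵗ P_πᵗ`. -/
noncomputable def discountedVisit (P : S → A → S → ℝ) (π : S → A → ℝ) (γ : ℝ) (s s' : S) : ℝ :=
  ∑' t, γ ^ t * visit P π t s s'

lemma discountedVisit_eq_add_sum_stepKernel {P : S → A → S → ℝ} {π : S → A → ℝ} (hP : IsKernel P)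
    (hπ : IsPolicy π) {γ : ℝ} (hγ0 : 0 ≤ γ) (hγ1 : γ < 1) (s s' : S) :
    discountedVisit P π γ s s'
      = (if s' = s then 1 else 0) + γ * ∑ s'', discountedVisit P π γ s s'' * stepKernel P π s'' s' := by
  rw [discountedVisit, (summable_pow_mul_visit hP hπ hγ0 hγ1 s s').tsum_eq_zero_add]
  have hstep : ∀ t, γ ^ (t + 1) * visit P π (t + 1) s s'
      = ∑ s'', γ * (γ ^ t * visit P π t s s'') * stepKernel P π s'' s' := fun t => by
    simp only [visit, mul_sum]
    exact sum_congr rfl fun _ _ => by ring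
  simp only [hstep]
  simp only [visit, pow_zero, one_mul, discountedVisit, mul_sum, ← tsum_mul_left,
    ← tsum_mul_right]
  rw [Summable.tsum_finsetSum fun s'' _ =>
    ((summable_pow_mul_visit hP hπ hγ0 hγ1 s s'').mul_left γ).mul_right _]
  simp only [mul_assoc]

lemma Vval_eq_sum_discountedVisit {P : S → A → S → ℝ} {π : S → A → ℝ} (hP : IsKernel P)
    (hπ : IsPolicy π) (r : S → A → ℝ) {γ : ℝ} (hγ0 : 0 ≤ γ) (hγ1 : γ < 1) (s : S) :
    Vval P r γ π s = ∑ s', discountedVisit P π γ s s' * rewardOf r π s' := by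
  simp only [Vval, discountedVisit, mul_sum, ← tsum_mul_right, ← mul_assoc]
  exact Summable.tsum_finsetSum fun s' _ =>
    (summable_pow_mul_visit hP hπ hγ0 hγ1 s s').mul_right _

lemma dvisit_eq_sum_discountedVisit {P : S → A → S → ℝ} {π : S → A → ℝ} (hP : IsKernel P)
    (hπ : IsPolicy π) (ρ₀ : S → ℝ) {γ : ℝ} (hγ0 : 0 ≤ γ) (hγ1 : γ < 1) (s : S) :
    dvisit P γ ρ₀ π s = (1 - γ) * ∑ s₀, ρ₀ s₀ * discountedVisit P π γ s₀ s := by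
  rw [dvisit]
  congr 1
  simp only [discountedVisit, mul_sum, ← tsum_mul_left]
  rw [← Summable.tsum_finsetSum fun s₀ _ =>
    (summable_pow_mul_visit hP hπ hγ0 hγ1 s₀ s).mul_left (ρ₀ s₀)]
  exact tsum_congr fun t => sum_congr rfl fun s₀ _ => by ring

lemma dvisit_nonneg {P : S → A → S → ℝ} {π : S → A → ℝ} (hP : IsKernel P) (hπ : IsPolicy π)
    {ρ₀ : S → ℝ} (hρ : IsDist ρ₀) {γ : ℝ} (hγ0 : 0 ≤ γ) (hγ1 : γ < 1) (s : S) :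
    0 ≤ dvisit P γ ρ₀ π s :=
  mul_nonneg (sub_nonneg.2 hγ1.le) <| tsum_nonneg fun t => mul_nonneg (pow_nonneg hγ0 t) <|
    sum_nonneg fun s₀ _ => mul_nonneg (hρ.1 s₀) (visit_nonneg hP hπ t s₀ s)

lemma dvisit_eq_add_sum_stepKernel {P : S → A → S → ℝ} {π : S → A → ℝ} (hP : IsKernel P) (hπ : IsPolicy π)
    (ρ₀ : S → ℝ) {γ : ℝ} (hγ0 : 0 ≤ γ) (hγ1 : γ < 1) (s' : S) :
    dvisit P γ ρ₀ π s' = (1 - γ) * ρ₀ s' + γ * ∑ s, dvisit P γ ρ₀ π s * stepKernel P π s s' := by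
  simp only [dvisit_eq_sum_discountedVisit hP hπ ρ₀ hγ0 hγ1,
    discountedVisit_eq_add_sum_stepKernel hP hπ hγ0 hγ1 _ s', mul_add, sum_add_distrib, mul_ite, mul_one, mul_zero,
    sum_ite_eq, mem_univ, if_true, mul_sum, sum_mul]
  rw [sum_comm]
  congr 1
  exact sum_congr rfl fun _ _ => sum_congr rfl fun _ _ => by ring

/-- `d_π` is `(1 - γ) ρ₀ (I - γ P_π)⁻¹`, so it turns the Bellman residual of any `f` into its
initial value. -/
lemma sum_dvisit_mul_sub_stepKernel {P : S → A → S → ℝ} {π : S → A → ℝ} (hP : IsKernel P)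
    (hπ : IsPolicy π) (ρ₀ : S → ℝ) {γ : ℝ} (hγ0 : 0 ≤ γ) (hγ1 : γ < 1) (f : S → ℝ) :
    ∑ s, dvisit P γ ρ₀ π s * (f s - γ * ∑ s', stepKernel P π s s' * f s')
      = (1 - γ) * ∑ s, ρ₀ s * f s := by
  have hswap : ∑ s, dvisit P γ ρ₀ π s * (γ * ∑ s', stepKernel P π s s' * f s')
      = ∑ s', (γ * ∑ s, dvisit P γ ρ₀ π s * stepKernel P π s s') * f s' := by
    simp only [mul_sum, sum_mul]
    rw [sum_comm]
    exact sum_congr rfl fun _ _ => sum_congr rfl fun _ _ => by ring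
  rw [mul_sum]
  simp only [mul_sub, sum_sub_distrib, hswap]
  conv_lhs => enter [1, 2, s]; rw [dvisit_eq_add_sum_stepKernel hP hπ ρ₀ hγ0 hγ1 s]
  rw [← sum_sub_distrib]
  exact sum_congr rfl fun _ _ => by ring

lemma sum_dvisit_mul_rewardOf {P : S → A → S → ℝ} {π : S → A → ℝ} (hP : IsKernel P)
    (hπ : IsPolicy π) (r : S → A → ℝ) (ρ₀ : S → ℝ) {γ : ℝ} (hγ0 : 0 ≤ γ) (hγ1 : γ < 1) :
    ∑ s, dvisit P γ ρ₀ π s * rewardOf r π s = (1 - γ) * Jval P r γ ρ₀ π := by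
  simp only [dvisit_eq_sum_discountedVisit hP hπ ρ₀ hγ0 hγ1, Jval,
    Vval_eq_sum_discountedVisit hP hπ r hγ0 hγ1, mul_sum, sum_mul]
  rw [sum_comm]
  exact sum_congr rfl fun _ _ => sum_congr rfl fun _ _ => by ring

lemma sum_mul_Adv {π' : S → A → ℝ} (hπ' : IsPolicy π') (P : S → A → S → ℝ) (r : S → A → ℝ)
    (γ : ℝ) (π : S → A → ℝ) (s : S) :
    ∑ a, π' s a * Adv P r γ π s a
      = rewardOf r π' s - (Vval P r γ π s - γ * ∑ s', stepKernel P π' s s' * Vval P r γ π s') := by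
  have hstep : ∑ a, π' s a * (γ * ∑ s', P s a s' * Vval P r γ π s')
      = γ * ∑ s', stepKernel P π' s s' * Vval P r γ π s' := by
    simp only [stepKernel, mul_sum, sum_mul]
    rw [sum_comm]
    exact sum_congr rfl fun _ _ => sum_congr rfl fun _ _ => by ring
  simp only [Adv, Qval, mul_sub, mul_add, sum_sub_distrib, sum_add_distrib, hstep, ← sum_mul,
    hπ'.2 s, one_mul, rewardOf]
  ring

theorem performance_difference {P : S → A → S → ℝ} {π π' : S → A → ℝ} (hP : IsKernel P)
    (hπ' : IsPolicy π') (r : S → A → ℝ) (ρ₀ : S → ℝ) {γ : ℝ} (hγ0 : 0 ≤ γ) (hγ1 : γ < 1) :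
    ∑ s, dvisit P γ ρ₀ π' s * ∑ a, π' s a * Adv P r γ π s a
      = (1 - γ) * (Jval P r γ ρ₀ π' - Jval P r γ ρ₀ π) := by
  calc _ = ∑ s, dvisit P γ ρ₀ π' s * rewardOf r π' s - ∑ s, dvisit P γ ρ₀ π' s *
        (Vval P r γ π s - γ * ∑ s', stepKernel P π' s s' * Vval P r γ π s') := by
        rw [← sum_sub_distrib]
        exact sum_congr rfl fun s _ => by rw [sum_mul_Adv hπ', mul_sub]
    _ = _ := by
        rw [sum_dvisit_mul_rewardOf hP hπ' r ρ₀ hγ0 hγ1, sum_dvisit_mul_sub_stepKernel hP hπ' ρ₀ hγ0 hγ1,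
          Jval, Jval, mul_sub]

lemma Jval_sub_surrogate_eq {P : S → A → S → ℝ} {π π' : S → A → ℝ} (hP : IsKernel P)
    (hπ' : IsPolicy π') (r : S → A → ℝ) (ρ₀ : S → ℝ) {γ : ℝ} (hγ0 : 0 ≤ γ) (hγ1 : γ < 1) :
    Jval P r γ ρ₀ π' - (Jval P r γ ρ₀ π +
        (1 / (1 - γ)) * ∑ s, dvisit P γ ρ₀ π s * ∑ a, π' s a * Adv P r γ π s a)
      = (1 - γ)⁻¹ * ∑ s, (dvisit P γ ρ₀ π' s - dvisit P γ ρ₀ π s) * ∑ a, π' s a * Adv P r γ π s a := by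
  have hγ : 1 - γ ≠ 0 := (sub_pos.2 hγ1).ne'
  simp only [sub_mul, sum_sub_distrib, performance_difference hP hπ' r ρ₀ hγ0 hγ1]
  field_simp
  ring

/-- Writing `d' - d = γ (d' - d) P_{π'} + γ d (P_{π'} - P_π)` and using that `P_{π'}` is an
`ℓ¹`-contraction gives `‖d' - d‖₁ ≤ γ ‖d' - d‖₁ + 2γ 𝔼_d[D_TV]`. -/
theorem sum_abs_dvisit_sub_le {P : S → A → S → ℝ} {π π' : S → A → ℝ} (hP : IsKernel P)
    (hπ : IsPolicy π) (hπ' : IsPolicy π') {ρ₀ : S → ℝ} (hρ : IsDist ρ₀) {γ : ℝ} (hγ0 : 0 ≤ γ)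
    (hγ1 : γ < 1) :
    ∑ s, |dvisit P γ ρ₀ π' s - dvisit P γ ρ₀ π s|
      ≤ 2 * γ / (1 - γ) * ∑ s, dvisit P γ ρ₀ π s * dtv (π' s) (π s) := by
  set d := dvisit P γ ρ₀ π
  set d' := dvisit P γ ρ₀ π'
  have hdecomp : ∀ s', d' s' - d s' = γ * (∑ s, (d' s - d s) * stepKernel P π' s s'
      + ∑ s, d s * (stepKernel P π' s s' - stepKernel P π s s')) := fun s' => by
    have hd : d s' = (1 - γ) * ρ₀ s' + γ * ∑ s, d s * stepKernel P π s s' :=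
      dvisit_eq_add_sum_stepKernel hP hπ ρ₀ hγ0 hγ1 s'
    have hd' : d' s' = (1 - γ) * ρ₀ s' + γ * ∑ s, d' s * stepKernel P π' s s' :=
      dvisit_eq_add_sum_stepKernel hP hπ' ρ₀ hγ0 hγ1 s'
    rw [hd, hd', add_sub_add_left_eq_sub, ← mul_sub, ← sum_sub_distrib, ← sum_add_distrib]
    exact congrArg _ (sum_congr rfl fun s _ => by ring)
  have hcontract : ∑ s', |∑ s, (d' s - d s) * stepKernel P π' s s'| ≤ ∑ s, |d' s - d s| :=
    (sum_abs_sum_mul_le _ _ (stepKernel_nonneg hP hπ')).trans_eq <| by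
      simp [sum_stepKernel hP hπ']
  have hpolicy := sum_abs_sum_mul_stepKernel_sub_le hP π π' (dvisit_nonneg hP hπ hρ hγ0 hγ1)
  have hrec : ∑ s, |d' s - d s| ≤ γ * (∑ s, |d' s - d s| + 2 * ∑ s, d s * dtv (π' s) (π s)) := by
    calc _ = γ * ∑ s', |∑ s, (d' s - d s) * stepKernel P π' s s'
              + ∑ s, d s * (stepKernel P π' s s' - stepKernel P π s s')| := by
          rw [mul_sum]
          exact sum_congr rfl fun s' _ => by rw [hdecomp, abs_mul, abs_of_nonneg hγ0]
      _ ≤ _ := mul_le_mul_of_nonneg_left ((sum_le_sum fun _ _ => abs_add_le _ _).trans <|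
          sum_add_distrib.trans_le (add_le_add hcontract hpolicy)) hγ0
  rw [div_mul_eq_mul_div, le_div_iff₀ (sub_pos.2 hγ1)]
  linarith

end

/-- **Surrogate-objective approximation bound** behind trust-region methods:
`|J(π') − L_π(π')| ≤ (2γ/(1−γ)²) A_max δ`. -/
theorem surrogate_objective_bound {S A : Type*} [Fintype S] [DecidableEq S] [Fintype A]
    (P : S → A → S → ℝ) (r : S → A → ℝ) (γ : ℝ) (ρ₀ : S → ℝ) (π π' : S → A → ℝ)
    (δ Amax : ℝ)
    (hP : IsKernel P) (hπ : IsPolicy π) (hπ' : IsPolicy π') (hρ : IsDist ρ₀)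
    (hγ0 : 0 ≤ γ) (hγ1 : γ < 1)
    (hA : ∀ s a, |Adv P r γ π s a| ≤ Amax)
    (hδ : ∑ s, dvisit P γ ρ₀ π s * dtv (π' s) (π s) ≤ δ) :
    |Jval P r γ ρ₀ π' -
        (Jval P r γ ρ₀ π +
          (1 / (1 - γ)) * ∑ s, dvisit P γ ρ₀ π s * ∑ a, π' s a * Adv P r γ π s a)| ≤
      (2 * γ / (1 - γ) ^ 2) * Amax * δ := by
  have hw : ∀ s, |∑ a, π' s a * Adv P r γ π s a| ≤ Amax := fun s => by
    simpa [abs_of_nonneg (hπ'.1 s _), hπ'.2 s] using abs_sum_mul_le (π' s) _ (hA s)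
  obtain ⟨s₀⟩ : Nonempty S := by
    by_contra h
    rw [not_nonempty_iff] at h
    simpa using hρ.2
  have hAmax : 0 ≤ Amax := (abs_nonneg _).trans (hw s₀)
  have h1γ : 0 < 1 - γ := sub_pos.2 hγ1
  rw [Jval_sub_surrogate_eq hP hπ' r ρ₀ hγ0 hγ1, abs_mul, abs_of_pos (inv_pos.2 h1γ)]
  calc _ ≤ (1 - γ)⁻¹ * ((∑ s, |dvisit P γ ρ₀ π' s - dvisit P γ ρ₀ π s|) * Amax) := by
        gcongr
        exact abs_sum_mul_le _ _ hw
    _ ≤ (1 - γ)⁻¹ * ((2 * γ / (1 - γ) * δ) * Amax) := by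
        gcongr
        exact (sum_abs_dvisit_sub_le hP hπ hπ' hρ hγ0 hγ1).trans (by gcongr)
    _ = 2 * γ / (1 - γ) ^ 2 * Amax * δ := by
        field_simp
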